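/- arXiv:1411.3650 — 5 statements merged into one kernel-verified Lean document; each statement's English description precedes it below -/
import Mathlib

section
/- (Greedy optimality of DUM / Edmonds) Let E be a finite set of L items, w : E → ℝ a vector of positive item utilities, and f : 2^E → ℝ a monotonically increasing submodular function with f(∅) = 0. Let A* = (a*₁, …, a*_L) be an ordering of E with w(a*₁) ≥ w(a*₂) ≥ … ≥ w(a*_L). Then A* maximizes the diversity-weighted utility objective over all orderings: for every ordering A = (a₁, …, a_L) of E, ∑_{k=1}^{L} g_{A*}(a*_k) · w(a*_k) ≥ ∑_{k=1}^{L} g_A(a_k) · w(a_k). -/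
/-! Let `c k` be the weight of the `k`-th item of `A*` (and `0` past its end) and `S k` the set
of its first `k + 1` items. Every weight splits into layers, `w e = ∑ (c k - c (k+1))` over the
`k` at or after the position of `e` in `A*`, so the objective of any ordering is
`∑ k, (c k - c (k+1)) · (gains it gives the items of S k)`. The layer coefficients are
nonnegative because `A*` is sorted and the weights are positive. By submodularity the gains an
ordering gives the items of a set `S` add up to at most `f S - f ∅`, with equality when `S` is a
prefix of that ordering, as every `S k` is for `A*`. -/

open Finset

/-- The set of the first `k` items of the ordering `A`, i.e. `A_k`. -/
def prefixSet {E : Type*} [DecidableEq E] (A : List E) (k : ℕ) : Finset E :=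
  (A.take k).toFinset

/-- The marginal gain `g_A(a_k) = f(A_{k-1} ∪ {a_k}) − f(A_{k-1})` of the item at
(0-based) position `i` of the ordering `A`. -/
def gain {E : Type*} [DecidableEq E] (f : Finset E → ℝ) (A : List E) (i : Fin A.length) : ℝ :=
  f (insert (A.get i) (prefixSet A i.val)) - f (prefixSet A i.val)

section Prefixes

variable {E : Type*} [DecidableEq E]

lemma prefixSet_zero (A : List E) : prefixSet A 0 = ∅ := by
  simp [prefixSet]

lemma prefixSet_length (A : List E) : prefixSet A A.length = A.toFinset := by
  simp [prefixSet]

lemma prefixSet_succ (A : List E) (i : Fin A.length) :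
    prefixSet A (i + 1) = insert (A.get i) (prefixSet A i) := by
  rw [prefixSet, List.take_add_one, List.getElem?_eq_getElem i.2, List.toFinset_append]
  simp [prefixSet]

lemma prefixSet_mono (A : List E) {m n : ℕ} (h : m ≤ n) : prefixSet A m ⊆ prefixSet A n :=
  fun _ he => List.mem_toFinset.2 (List.take_subset_take_left A h (List.mem_toFinset.1 he))

lemma mem_prefixSet_iff {A : List E} {e : E} (he : e ∈ A) (n : ℕ) :
    e ∈ prefixSet A n ↔ A.idxOf e < n := by
  rw [prefixSet, List.mem_toFinset, List.mem_take_iff_idxOf_lt he]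

lemma get_mem_prefixSet_iff {A : List E} (hA : A.Nodup) (i : Fin A.length) (n : ℕ) :
    A.get i ∈ prefixSet A n ↔ (i : ℕ) < n := by
  rw [mem_prefixSet_iff (List.get_mem A i), List.get_idxOf hA]

lemma get_notMem_prefixSet {A : List E} (hA : A.Nodup) (i : Fin A.length) :
    A.get i ∉ prefixSet A i :=
  fun h => lt_irrefl _ ((get_mem_prefixSet_iff hA i i).1 h)

lemma prefixSet_subset_toFinset (A : List E) (n : ℕ) : prefixSet A n ⊆ A.toFinset :=
  fun _ he => List.mem_toFinset.2 (List.mem_of_mem_take (List.mem_toFinset.1 he))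

end Prefixes

section Gains

variable {E : Type*} [DecidableEq E] (f : Finset E → ℝ)

lemma gain_eq_sub (A : List E) (i : Fin A.length) :
    gain f A i = f (prefixSet A (i + 1)) - f (prefixSet A i) := by
  rw [gain, prefixSet_succ]

lemma sum_sub_inter_prefixSet (A : List E) (S : Finset E) :
    ∑ i : Fin A.length, (f (S ∩ prefixSet A (i + 1)) - f (S ∩ prefixSet A i)) =
      f (S ∩ A.toFinset) - f ∅ := by
  rw [Fin.sum_univ_eq_sum_range (fun i => f (S ∩ prefixSet A (i + 1)) - f (S ∩ prefixSet A i)),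
    Finset.sum_range_sub (fun i => f (S ∩ prefixSet A i)), prefixSet_length, prefixSet_zero,
    inter_empty]

lemma inter_prefixSet_succ_of_notMem (A : List E) {S : Finset E} (i : Fin A.length)
    (hi : A.get i ∉ S) : S ∩ prefixSet A (i + 1) = S ∩ prefixSet A i := by
  rw [prefixSet_succ, inter_insert_of_notMem hi]

lemma gain_le_of_mem (hsub : ∀ X Y : Finset E, f (X ∪ Y) + f (X ∩ Y) ≤ f X + f Y)
    {A : List E} (hA : A.Nodup) {S : Finset E} (i : Fin A.length) (hi : A.get i ∈ S) :
    gain f A i ≤ f (S ∩ prefixSet A (i + 1)) - f (S ∩ prefixSet A i) := by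
  set a := A.get i
  set P := prefixSet A i
  have hunion : insert a (S ∩ P) ∪ P = insert a P := by
    rw [insert_union, union_eq_right.2 inter_subset_right]
  have hinter : insert a (S ∩ P) ∩ P = S ∩ P := by
    rw [insert_inter_of_notMem (get_notMem_prefixSet hA i), inter_assoc, inter_self]
  have hsubmod := hsub (insert a (S ∩ P)) P
  rw [hunion, hinter] at hsubmod
  rw [gain, prefixSet_succ, inter_insert_of_mem hi]
  linarith

lemma gain_eq_of_mem_prefixSet {A : List E} (hA : A.Nodup) {n : ℕ} (i : Fin A.length)
    (hi : A.get i ∈ prefixSet A n) :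
    gain f A i = f (prefixSet A n ∩ prefixSet A (i + 1)) - f (prefixSet A n ∩ prefixSet A i) := by
  have hin : (i : ℕ) + 1 ≤ n := (get_mem_prefixSet_iff hA i n).1 hi
  rw [inter_eq_right.2 (prefixSet_mono A hin), inter_eq_right.2 (prefixSet_mono A (by omega)),
    gain_eq_sub]

lemma sum_gain_mem_le (hsub : ∀ X Y : Finset E, f (X ∪ Y) + f (X ∩ Y) ≤ f X + f Y)
    {A : List E} (hA : A.Nodup) (S : Finset E) :
    ∑ i : Fin A.length, (if A.get i ∈ S then gain f A i else 0) ≤ f (S ∩ A.toFinset) - f ∅ := by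
  rw [← sum_sub_inter_prefixSet]
  gcongr with i
  split_ifs with hi
  · exact gain_le_of_mem f hsub hA i hi
  · rw [inter_prefixSet_succ_of_notMem A i hi, sub_self]

lemma sum_gain_mem_prefixSet {A : List E} (hA : A.Nodup) (n : ℕ) :
    ∑ i : Fin A.length, (if A.get i ∈ prefixSet A n then gain f A i else 0) =
      f (prefixSet A n) - f ∅ := by
  have htelescope := sum_sub_inter_prefixSet f A (prefixSet A n)
  rw [inter_eq_left.2 (prefixSet_subset_toFinset A n)] at htelescope
  rw [← htelescope]
  refine sum_congr rfl fun i _ => ?_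
  split_ifs with hi
  · exact gain_eq_of_mem_prefixSet f hA i hi
  · rw [inter_prefixSet_succ_of_notMem A i hi, sub_self]

end Gains

section Weights

variable {E : Type*} (w : E → ℝ)

def weightAt (l : List E) (k : ℕ) : ℝ :=
  (l[k]?.map w).getD 0

lemma weightAt_of_lt {l : List E} {k : ℕ} (hk : k < l.length) : weightAt w l k = w l[k] := by
  simp [weightAt, List.getElem?_eq_getElem hk]

lemma weightAt_of_length_le {l : List E} {k : ℕ} (hk : l.length ≤ k) : weightAt w l k = 0 := by
  simp [weightAt, List.getElem?_eq_none hk]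

lemma weightAt_nonneg {l : List E} (hw : ∀ e ∈ l, 0 ≤ w e) (k : ℕ) : 0 ≤ weightAt w l k := by
  rcases lt_or_ge k l.length with hk | hk
  · rw [weightAt_of_lt w hk]; exact hw _ (List.getElem_mem hk)
  · rw [weightAt_of_length_le w hk]

lemma weightAt_succ_le {l : List E} (hsorted : l.Pairwise (fun a b => w b ≤ w a))
    (hw : ∀ e ∈ l, 0 ≤ w e) (k : ℕ) : weightAt w l (k + 1) ≤ weightAt w l k := by
  rcases lt_or_ge (k + 1) l.length with hk | hk
  · rw [weightAt_of_lt w hk, weightAt_of_lt w (by omega)]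
    exact List.pairwise_iff_getElem.1 hsorted k (k + 1) _ hk (by omega)
  · rw [weightAt_of_length_le w hk]
    exact weightAt_nonneg w hw k

lemma weightAt_idxOf [DecidableEq E] {l : List E} {e : E} (he : e ∈ l) :
    weightAt w l (l.idxOf e) = w e := by
  rw [weightAt_of_lt w (List.idxOf_lt_length_of_mem he), List.getElem_idxOf]

variable [DecidableEq E]

lemma sum_layers_eq_weight {l : List E} {e : E} (he : e ∈ l) :
    ∑ k : Fin l.length,
      (if e ∈ prefixSet l (k + 1) then weightAt w l k - weightAt w l (k + 1) else 0) = w e := by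
  -- the layers telescope along `k ↦ weightAt w l (max k (l.idxOf e))`
  have hlayer (k : ℕ) :
      (if e ∈ prefixSet l (k + 1) then weightAt w l k - weightAt w l (k + 1) else 0) =
        weightAt w l (max k (l.idxOf e)) - weightAt w l (max (k + 1) (l.idxOf e)) := by
    split_ifs with hk <;> rw [mem_prefixSet_iff he] at hk
    · rw [max_eq_left (by omega), max_eq_left (by omega)]
    · rw [max_eq_right (by omega), max_eq_right (by omega), sub_self]
  rw [Fin.sum_univ_eq_sum_range
      (fun k => if e ∈ prefixSet l (k + 1) then weightAt w l k - weightAt w l (k + 1) else 0),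
    sum_congr rfl fun k _ => hlayer k, sum_range_sub', max_eq_right (Nat.zero_le _),
    max_eq_left List.idxOf_le_length, weightAt_of_length_le w le_rfl, sub_zero,
    weightAt_idxOf w he]

lemma sum_mul_weight_eq_sum_layers {ι : Type*} [Fintype ι] (l : List E) (g : ι → ℝ) (b : ι → E)
    (hb : ∀ i, b i ∈ l) :
    ∑ i, g i * w (b i) = ∑ k : Fin l.length, (weightAt w l k - weightAt w l (k + 1)) *
      ∑ i, (if b i ∈ prefixSet l (k + 1) then g i else 0) := by
  simp_rw [← sum_layers_eq_weight w (hb _), mul_sum, mul_ite, mul_zero]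
  rw [sum_comm]
  simp_rw [mul_comm]

end Weights

theorem stmt_2_general {E : Type*} [DecidableEq E]
    (f : Finset E → ℝ)
    (hsub : ∀ X Y : Finset E, f (X ∪ Y) + f (X ∩ Y) ≤ f X + f Y)
    (w : E → ℝ) (hw : ∀ e : E, 0 < w e)
    (Astar : List E) (hnodupStar : Astar.Nodup) (hfullStar : ∀ e : E, e ∈ Astar)
    (hsorted : Astar.Pairwise (fun a b => w b ≤ w a))
    (A : List E) (hnodup : A.Nodup) (hfull : ∀ e : E, e ∈ A) :
    ∑ i : Fin A.length, gain f A i * w (A.get i) ≤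
      ∑ i : Fin Astar.length, gain f Astar i * w (Astar.get i) := by
  rw [sum_mul_weight_eq_sum_layers w Astar (gain f A) A.get fun _ => hfullStar _,
    sum_mul_weight_eq_sum_layers w Astar (gain f Astar) Astar.get fun _ => hfullStar _]
  gcongr with k
  · exact sub_nonneg.2 (weightAt_succ_le w hsorted (fun e _ => (hw e).le) k)
  · have hA : prefixSet Astar (k + 1) ∩ A.toFinset = prefixSet Astar (k + 1) :=
      inter_eq_left.2 fun e _ => List.mem_toFinset.2 (hfull e)
    rw [sum_gain_mem_prefixSet f hnodupStar]
    exact (sum_gain_mem_le f hsub hnodup _).trans_eq (by rw [hA])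

/-- Greedy optimality of DUM: the ordering of `E` by decreasing utility maximizes the
diversity-weighted utility objective `∑_k g_A(a_k) · w(a_k)` over all orderings. -/
theorem stmt_2 {E : Type*} [Fintype E] [DecidableEq E]
    (f : Finset E → ℝ) (hf0 : f ∅ = 0)
    (hmono : ∀ (X : Finset E) (e : E), e ∉ X → f X ≤ f (insert e X))
    (hsub : ∀ X Y : Finset E, f (X ∪ Y) + f (X ∩ Y) ≤ f X + f Y)
    (w : E → ℝ) (hw : ∀ e : E, 0 < w e)
    (Astar : List E) (hnodupStar : Astar.Nodup) (hfullStar : ∀ e : E, e ∈ Astar)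
    (hsorted : Astar.Pairwise (fun a b => w b ≤ w a))
    (A : List E) (hnodup : A.Nodup) (hfull : ∀ e : E, e ∈ A) :
    ∑ i : Fin A.length, gain f A i * w (A.get i) ≤
      ∑ i : Fin Astar.length, gain f Astar i * w (Astar.get i) :=
  stmt_2_general f hsub w hw Astar hnodupStar hfullStar hsorted A hnodup hfull
end

section
/- (Greedy solves the maximum-weight basis problem) Let E be a finite set, f : 2^E → ℝ a monotonically increasing submodular function with f(∅) = 0, and w : E → ℝ a vector of nonnegative weights. Let A* = (a*₁, …, a*_L) be an ordering of E with w(a*₁) ≥ … ≥ w(a*_L), and let x* ∈ ℝ^E be its gains vector, x*(a*_k) = f(A*_{k-1} ∪ {a*_k}) − f(A*_{k-1}). Then x* maximizes the linear objective ⟨w, x⟩ = ∑_{e∈E} w(e) x(e) over the independence polyhedron P_M = {x ∈ ℝ^E : x ≥ 0 and ∑_{e∈X} x(e) ≤ f(X) for all X ⊆ E}; i.e., ⟨w, x⟩ ≤ ⟨w, x*⟩ for every x ∈ P_M. -/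
/-!
By Abel summation along a weight-sorted ordering `A`, the objective `⟨w, x⟩` is a combination of
the prefix sums `x(A_k)` with the nonnegative coefficients `w(a_k) - w(a_{k+1})` and `w(a_L)`.
Every `x ∈ P_M` has `x(A_k) ≤ f(A_k)`, while the gains of `A` telescope to `x*(A_k) = f(A_k)`, so
`x*` maximizes all these prefix sums at once.
-/

open Finset

namespace List

variable {ι : Type*}

theorem sum_map_mul_le_of_sum_take_le (w x y : ι → ℝ) (l : List ι) (hw : ∀ a ∈ l, 0 ≤ w a)
    (hl : l.Pairwise fun a b => w b ≤ w a)
    (hxy : ∀ k, ((l.take k).map x).sum ≤ ((l.take k).map y).sum) :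
    (l.map fun a => w a * x a).sum ≤ (l.map fun a => w a * y a).sum := by
  induction l using List.reverseRecOn generalizing w with
  | nil => simp
  | append_singleton t a ih =>
    obtain ⟨ht, -, hta⟩ := List.pairwise_append.mp hl
    have hwa : ∀ b ∈ t, w a ≤ w b := fun b hb => hta b hb a (List.mem_singleton_self a)
    have htake : ∀ k, t.take k = (t ++ [a]).take (min k t.length) := fun k => by
      rw [← List.take_take, List.take_left]
    -- Subtracting the last weight `w a` from every weight keeps the hypotheses on `t`.
    have hshift := ih (fun b => w b - w a) (fun b hb => sub_nonneg.mpr (hwa b hb))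
      (ht.imp fun h => sub_le_sub_right h _) fun k => htake k ▸ hxy _
    have htotal := hxy (t ++ [a]).length
    simp only [List.take_length, List.map_append, List.sum_append, List.map_cons,
      List.map_nil, List.sum_cons, List.sum_nil, add_zero] at htotal hshift ⊢
    have hsplit : ∀ z : ι → ℝ, (t.map fun b => w b * z b).sum + w a * z a
        = (t.map fun b => (w b - w a) * z b).sum + w a * ((t.map z).sum + z a) := fun z => by
      rw [mul_add, ← List.sum_map_mul_left, ← add_assoc, ← List.sum_map_add]
      simp only [sub_mul, sub_add_cancel]
    rw [hsplit x, hsplit y]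
    gcongr
    exact hw a (List.mem_append_right t (List.mem_singleton_self a))

end List

theorem sum_map_take_eq_of_eq_gain {E : Type*} [DecidableEq E] {f : Finset E → ℝ}
    (hf0 : f ∅ = 0) {A : List E} {x : E → ℝ} (hx : ∀ i : Fin A.length, x (A.get i) = gain f A i)
    (k : ℕ) : ((A.take k).map x).sum = f (prefixSet A k) := by
  induction k with
  | zero => simp [prefixSet, hf0]
  | succ k ih =>
    rw [List.take_add_one, List.map_append, List.sum_append, ih]
    cases hk : A[k]? with
    | none => simp [prefixSet, List.take_add_one, hk]
    | some a =>
      obtain ⟨hkA, ha⟩ := List.getElem?_eq_some_iff.mp hk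
      have hprefix : prefixSet A (k + 1) = insert a (prefixSet A k) := by
        simp [prefixSet, List.take_add_one, hk]
      have hgain := hx ⟨k, hkA⟩
      simp only [gain, List.get_eq_getElem, ha] at hgain
      simp [hprefix, hgain]

theorem stmt_4_general {E : Type*} [Fintype E] [DecidableEq E]
    (f : Finset E → ℝ) (hf0 : f ∅ = 0)
    (w : E → ℝ) (hw : ∀ e : E, 0 ≤ w e)
    (Astar : List E) (hnodup : Astar.Nodup) (hfull : ∀ e : E, e ∈ Astar)
    (hsorted : Astar.Pairwise (fun a b => w b ≤ w a))
    (xstar : E → ℝ) (hxstar : ∀ i : Fin Astar.length, xstar (Astar.get i) = gain f Astar i) :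
    ∀ x : E → ℝ, (∀ e : E, 0 ≤ x e) → (∀ X : Finset E, ∑ e ∈ X, x e ≤ f X) →
      ∑ e : E, w e * x e ≤ ∑ e : E, w e * xstar e := by
  intro x _ hxP
  have huniv : Astar.toFinset = Finset.univ :=
    Finset.eq_univ_of_forall fun e => List.mem_toFinset.mpr (hfull e)
  rw [← huniv, List.sum_toFinset _ hnodup, List.sum_toFinset _ hnodup]
  refine List.sum_map_mul_le_of_sum_take_le w x xstar Astar (fun a _ => hw a) hsorted fun k => ?_
  rw [sum_map_take_eq_of_eq_gain hf0 hxstar k,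
    ← List.sum_toFinset _ (hnodup.sublist (Astar.take_sublist k))]
  exact hxP _

/-- The gains vector of the ordering by decreasing weight maximizes `⟨w, x⟩` over the
independence polyhedron `P_M`. -/
theorem stmt_4 {E : Type*} [Fintype E] [DecidableEq E]
    (f : Finset E → ℝ) (hf0 : f ∅ = 0)
    (hmono : ∀ (X : Finset E) (e : E), e ∉ X → f X ≤ f (insert e X))
    (hsub : ∀ X Y : Finset E, f (X ∪ Y) + f (X ∩ Y) ≤ f X + f Y)
    (w : E → ℝ) (hw : ∀ e : E, 0 ≤ w e)
    (Astar : List E) (hnodup : Astar.Nodup) (hfull : ∀ e : E, e ∈ Astar)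
    (hsorted : Astar.Pairwise (fun a b => w b ≤ w a))
    (xstar : E → ℝ) (hxstar : ∀ i : Fin Astar.length, xstar (Astar.get i) = gain f Astar i) :
    ∀ x : E → ℝ, (∀ e : E, 0 ≤ x e) → (∀ X : Finset E, ∑ e ∈ X, x e ≤ f X) →
      ∑ e : E, w e * x e ≤ ∑ e : E, w e * xstar e :=
  stmt_4_general f hf0 w hw Astar hnodup hfull hsorted xstar hxstar
end

section
/- (Lemma 1, first claim) Let E be a finite set of items, T a finite set of topics, and cover : E → 2^T a map assigning to each item the set of topics it covers. Define the diversity function f(X) = |{t ∈ T : ∃ e ∈ X, t ∈ cover(e)}|, the number of topics covered by X. Let w : E → ℝ be utilities and A* = (a*₁, …, a*_L) an ordering of E with w(a*₁) ≥ … ≥ w(a*_L). Fix a topic t and suppose item e covers t and e is the unique highest-utility item covering t, i.e., w(e) > w(e′) for every e′ ≠ e that covers t. Then e has strictly positive marginal gain in A* (g_{A*}(e) > 0), and hence e belongs to the recommendation list S produced by the DUM algorithm (the subsequence of A* consisting of items with strictly positive marginal gain). -/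
/-!
Every item placed before `e` in `A*` has utility at least `w e` and differs from `e`, so by
the uniqueness of `e` it does not cover `t`. Hence `t` is a new topic when `e` is added, and the
coverage count strictly increases.
-/

open Finset

open Classical in
/-- The recommendation list produced by the DUM algorithm from the ordering `A`:
the subsequence of `A` consisting of the items with strictly positive marginal gain. -/
noncomputable def dumList {E : Type*} [DecidableEq E] (f : Finset E → ℝ) (A : List E) :
    List E :=
  ((List.finRange A.length).filter (fun i => decide (0 < gain f A i))).map A.get

/-- The topic-coverage diversity function: the number of topics covered by `X`. -/
def coverDiversity {E T : Type*} [DecidableEq E] [DecidableEq T]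
    (cover : E → Finset T) (X : Finset E) : ℝ :=
  ((X.biUnion cover).card : ℝ)

theorem List.Pairwise.rel_of_mem_prefixSet {E : Type*} [DecidableEq E] {R : E → E → Prop}
    {A : List E} (h : A.Pairwise R) (i : Fin A.length) {x : E} (hx : x ∈ prefixSet A i) :
    R x (A.get i) :=
  h.rel_of_mem_take_of_mem_drop (List.mem_toFinset.1 hx)
    (List.mem_drop_iff_getElem.2 ⟨0, by simp, by simp⟩)

theorem coverDiversity_lt_insert {E T : Type*} [DecidableEq E] [DecidableEq T]
    (cover : E → Finset T) {X : Finset E} {a : E} {t : T} (ht : t ∈ cover a)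
    (hX : t ∉ X.biUnion cover) :
    coverDiversity cover X < coverDiversity cover (insert a X) := by
  have hssubset : X.biUnion cover ⊂ (insert a X).biUnion cover :=
    Finset.ssubset_iff_subset_ne.2
      ⟨biUnion_subset_biUnion_of_subset_left _ (subset_insert a X),
        fun heq => hX (heq ▸ mem_biUnion.2 ⟨a, mem_insert_self a X, ht⟩)⟩
  unfold coverDiversity
  exact_mod_cast card_lt_card hssubset

theorem get_mem_dumList_of_gain_pos {E : Type*} [DecidableEq E] (f : Finset E → ℝ)
    {A : List E} {i : Fin A.length} (h : 0 < gain f A i) : A.get i ∈ dumList f A :=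
  List.mem_map_of_mem (List.mem_filter.2 ⟨List.mem_finRange i, decide_eq_true h⟩)

theorem stmt_5_general {E T : Type*} [DecidableEq E] [DecidableEq T]
    (cover : E → Finset T) (w : E → ℝ)
    (Astar : List E) (hnodup : Astar.Nodup) (hfull : ∀ e : E, e ∈ Astar)
    (hsorted : Astar.Pairwise (fun a b => w b ≤ w a))
    (e : E) (t : T) (ht : t ∈ cover e)
    (hbest : ∀ e' : E, e' ≠ e → t ∈ cover e' → w e' < w e) :
    (∀ i : Fin Astar.length, Astar.get i = e → 0 < gain (coverDiversity cover) Astar i) ∧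
    e ∈ dumList (coverDiversity cover) Astar := by
  have hgain : ∀ i : Fin Astar.length, Astar.get i = e →
      0 < gain (coverDiversity cover) Astar i := by
    rintro i rfl
    have hnew : t ∉ (prefixSet Astar i).biUnion cover := by
      intro hcov
      obtain ⟨x, hx, htx⟩ := mem_biUnion.1 hcov
      exact (hsorted.rel_of_mem_prefixSet i hx).not_gt
        (hbest x (hnodup.rel_of_mem_prefixSet i hx) htx)
    exact sub_pos.2 (coverDiversity_lt_insert cover ht hnew)
  obtain ⟨i, rfl⟩ := List.mem_iff_get.1 (hfull e)
  exact ⟨hgain, get_mem_dumList_of_gain_pos _ (hgain i rfl)⟩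

/-- Lemma 1, first claim: if `e` is the unique highest-utility item covering topic `t`,
then `e` has strictly positive marginal gain in the decreasing-utility ordering `A*`,
and hence belongs to the DUM recommendation list. -/
theorem stmt_5 {E T : Type*} [Fintype E] [DecidableEq E] [Fintype T] [DecidableEq T]
    (cover : E → Finset T) (w : E → ℝ)
    (Astar : List E) (hnodup : Astar.Nodup) (hfull : ∀ e : E, e ∈ Astar)
    (hsorted : Astar.Pairwise (fun a b => w b ≤ w a))
    (e : E) (t : T) (ht : t ∈ cover e)
    (hbest : ∀ e' : E, e' ≠ e → t ∈ cover e' → w e' < w e) :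
    (∀ i : Fin Astar.length, Astar.get i = e → 0 < gain (coverDiversity cover) Astar i) ∧
    e ∈ dumList (coverDiversity cover) Astar :=
  stmt_5_general cover w Astar hnodup hfull hsorted e t ht hbest
end

section
/- (Lemma 2, first claim) Let E be a finite set of items, T a finite set of topics, cover : E → 2^T, and for each topic t let N_t be a nonnegative integer. Define the capped diversity function f(X) = ∑_{t∈T} min(|{e ∈ X : t ∈ cover(e)}|, N_t). Let w : E → ℝ be utilities with pairwise distinct values, and A* an ordering of E with w(a*₁) > … > w(a*_L). Fix a topic t and an item e covering t such that e is among the N_t highest-utility items covering t, i.e., |{e′ ∈ E : e′ covers t and w(e′) > w(e)}| < N_t. Then e has strictly positive marginal gain in A* (g_{A*}(e) > 0), and hence e belongs to the recommendation list S produced by the DUM algorithm. Consequently, for every topic t, S contains the min(N_t, m_t) highest-utility items covering t, where m_t is the total number of items covering t. -/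
open Finset

/-- The capped topic-coverage diversity function
`f(X) = ∑_{t∈T} min(|{e ∈ X : t ∈ cover(e)}|, N_t)`. -/
def cappedDiversity {E T : Type*} [Fintype T] [DecidableEq E] [DecidableEq T]
    (cover : E → Finset T) (N : T → ℕ) (X : Finset E) : ℝ :=
  ∑ t : T, ((min ((X.filter (fun e => t ∈ cover e)).card) (N t) : ℕ) : ℝ)

/-!
An item `e` covering `t` whose higher-utility competitors for `t` number fewer than `N t` still
finds topic `t` below its cap when it is reached in `A*`: everything placed before `e` has higher
utility, so at most those competitors cover `t`. Adding `e` then raises the `t`-summand of `f` by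
one, while no summand decreases.
-/

theorem List.Pairwise.rel_get_of_mem_take {α : Type*} {R : α → α → Prop} {A : List α}
    (hA : A.Pairwise R) (i : Fin A.length) {x : α} (hx : x ∈ A.take i) : R x (A.get i) := by
  rw [← List.take_append_drop i A, List.pairwise_append] at hA
  exact hA.2.2 x hx _ (List.mem_drop_iff_getElem.mpr ⟨0, by simp, by simp⟩)

section CappedDiversity

variable {E T : Type*} [Fintype T] [DecidableEq E] [DecidableEq T]
  (cover : E → Finset T) (N : T → ℕ)

theorem cappedDiversity_lt_insert {X : Finset E} {e : E} (he : e ∉ X) {t : T}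
    (ht : t ∈ cover e) (hcap : (X.filter (fun x => t ∈ cover x)).card < N t) :
    cappedDiversity cover N X < cappedDiversity cover N (insert e X) := by
  unfold cappedDiversity
  refine Finset.sum_lt_sum (fun t' _ => ?_) ⟨t, Finset.mem_univ t, ?_⟩
  · gcongr
    exact Finset.subset_insert e X
  · rw [Finset.filter_insert, if_pos ht,
      Finset.card_insert_of_notMem (fun h => he (Finset.mem_filter.mp h).1),
      min_eq_left hcap.le, min_eq_left hcap]
    push_cast
    exact lt_add_one _

theorem gain_cappedDiversity_pos [Fintype E] (w : E → ℝ) {A : List E} (hnodup : A.Nodup)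
    (hsorted : A.Pairwise (fun a b => w b < w a)) (i : Fin A.length) {t : T}
    (ht : t ∈ cover (A.get i))
    (htop : (Finset.univ.filter (fun x => t ∈ cover x ∧ w (A.get i) < w x)).card < N t) :
    0 < gain (cappedDiversity cover N) A i := by
  have hhigher : ∀ x ∈ prefixSet A i, w (A.get i) < w x := fun x hx =>
    hsorted.rel_get_of_mem_take i (List.mem_toFinset.mp hx)
  have hfresh : A.get i ∉ prefixSet A i := fun hx =>
    List.Pairwise.rel_get_of_mem_take hnodup i (List.mem_toFinset.mp hx) rfl
  rw [gain, sub_pos]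
  refine cappedDiversity_lt_insert cover N hfresh ht (lt_of_le_of_lt (Finset.card_le_card ?_) htop)
  intro x hx
  simp only [Finset.mem_filter, Finset.mem_univ, true_and] at hx ⊢
  exact ⟨hx.2, hhigher x hx.1⟩

end CappedDiversity

open Classical in
theorem stmt_7_general {E T : Type*} [Fintype E] [DecidableEq E] [Fintype T] [DecidableEq T]
    (cover : E → Finset T) (N : T → ℕ)
    (w : E → ℝ)
    (Astar : List E) (hnodup : Astar.Nodup) (hfull : ∀ e : E, e ∈ Astar)
    (hsorted : Astar.Pairwise (fun a b => w b < w a))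
    (e : E) (t : T) (ht : t ∈ cover e)
    (htop : (Finset.univ.filter (fun e' : E => t ∈ cover e' ∧ w e < w e')).card < N t) :
    ((∀ i : Fin Astar.length, Astar.get i = e →
        0 < gain (cappedDiversity cover N) Astar i) ∧
      e ∈ dumList (cappedDiversity cover N) Astar) ∧
    (∀ (t' : T) (e' : E), t' ∈ cover e' →
      (Finset.univ.filter (fun e'' : E => t' ∈ cover e'' ∧ w e' < w e'')).card < N t' →
      e' ∈ dumList (cappedDiversity cover N) Astar) := by
  have hmem : ∀ (t' : T) (e' : E), t' ∈ cover e' →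
      (Finset.univ.filter (fun e'' : E => t' ∈ cover e'' ∧ w e' < w e'')).card < N t' →
      e' ∈ dumList (cappedDiversity cover N) Astar := by
    intro t' e' ht' htop'
    obtain ⟨i, rfl⟩ := List.mem_iff_get.mp (hfull e')
    exact get_mem_dumList_of_gain_pos _
      (gain_cappedDiversity_pos cover N w hnodup hsorted i ht' htop')
  refine ⟨⟨?_, hmem t e ht htop⟩, hmem⟩
  rintro i rfl
  exact gain_cappedDiversity_pos cover N w hnodup hsorted i ht htop

open Classical in
/-- Lemma 2, first claim: if `e` is among the `N_t` highest-utility items covering topic `t`,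
then `e` has strictly positive marginal gain in the strictly-decreasing-utility ordering `A*`
and hence belongs to the DUM recommendation list `S`; consequently, for every topic, `S`
contains the `min(N_t, m_t)` highest-utility items covering that topic. -/
theorem stmt_7 {E T : Type*} [Fintype E] [DecidableEq E] [Fintype T] [DecidableEq T]
    (cover : E → Finset T) (N : T → ℕ)
    (w : E → ℝ) (hwinj : Function.Injective w)
    (Astar : List E) (hnodup : Astar.Nodup) (hfull : ∀ e : E, e ∈ Astar)
    (hsorted : Astar.Pairwise (fun a b => w b < w a))
    (e : E) (t : T) (ht : t ∈ cover e)
    (htop : (Finset.univ.filter (fun e' : E => t ∈ cover e' ∧ w e < w e')).card < N t) :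
    ((∀ i : Fin Astar.length, Astar.get i = e →
        0 < gain (cappedDiversity cover N) Astar i) ∧
      e ∈ dumList (cappedDiversity cover N) Astar) ∧
    (∀ (t' : T) (e' : E), t' ∈ cover e' →
      (Finset.univ.filter (fun e'' : E => t' ∈ cover e'' ∧ w e' < w e'')).card < N t' →
      e' ∈ dumList (cappedDiversity cover N) Astar) :=
  stmt_7_general cover N w Astar hnodup hfull hsorted e t ht htop
end

section
/- (DUM objective value identity) Let E be a finite set of items, w : E → ℝ positive utilities, and f : 2^E → ℝ a monotonically increasing submodular function with f(∅) = 0. Let A* = (a*₁, …, a*_L) be the ordering of E by decreasing utility and S the subsequence of A* consisting of items with strictly positive marginal gain. Then the value of the DUM objective on S, computed with marginal gains taken along S itself (i.e., ∑_{i} (f(S_{i-1} ∪ {s_i}) − f(S_{i-1})) · w(s_i) where S_i is the set of the first i items of S), equals the value ∑_{k=1}^{L} g_{A*}(a*_k) · w(a*_k) of the objective on the full ordering A*. -/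
open Finset

/-!
Induct along the ordering, contracting `f` by its first item `x` to `T ↦ f (insert x T)`: the
contraction is again monotone and submodular, and the gains along `x :: A` after position `0`
are the gains of the contraction along `A`. If `x` has positive gain, it heads both lists.
Otherwise its gain is `0`, and submodularity forces `f (insert x T) = f T` for every `T`, so `x`
contributes nothing and the contraction is `f` itself.
-/

section

variable {E : Type*} [DecidableEq E]

def Submodular (f : Finset E → ℝ) : Prop :=
  ∀ X Y : Finset E, f (X ∪ Y) + f (X ∩ Y) ≤ f X + f Y

def dumObjective (f : Finset E → ℝ) (w : E → ℝ) (A : List E) : ℝ :=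
  ∑ i : Fin A.length, gain f A i * w (A.get i)

lemma Monotone.comp_insert {f : Finset E → ℝ} (hf : Monotone f) (x : E) :
    Monotone fun T => f (insert x T) :=
  fun _ _ h => hf (insert_subset_insert x h)

lemma Submodular.comp_insert {f : Finset E → ℝ} (hf : Submodular f) (x : E) :
    Submodular fun T => f (insert x T) := by
  intro X Y
  simpa only [insert_union, union_insert, insert_idem, ← insert_inter_distrib]
    using hf (insert x X) (insert x Y)

/-- Submodularity bounds the gain of `x` at any `T` by its gain at `∅`. -/
lemma Submodular.comp_insert_eq_self_of_le {f : Finset E → ℝ} (hmono : Monotone f)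
    (hsub : Submodular f) {x : E} (hx : f {x} ≤ f ∅) :
    (fun T => f (insert x T)) = f := by
  funext T
  by_cases hxT : x ∈ T
  · rw [insert_eq_of_mem hxT]
  · refine le_antisymm ?_ (hmono (subset_insert x T))
    have h := hsub T {x}
    rw [union_singleton, inter_singleton_of_notMem hxT] at h
    linarith

lemma prefixSet_cons_succ (x : E) (A : List E) (i : ℕ) :
    prefixSet (x :: A) (i + 1) = insert x (prefixSet A i) := by
  simp [prefixSet]

lemma gain_cons_zero (f : Finset E → ℝ) (x : E) (A : List E) :
    gain f (x :: A) (0 : Fin (A.length + 1)) = f {x} - f ∅ := by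
  simp [gain, prefixSet]

lemma gain_cons_succ (f : Finset E → ℝ) (x : E) (A : List E) (i : Fin A.length) :
    gain f (x :: A) i.succ = gain (fun T => f (insert x T)) A i := by
  have hget : (x :: A).get i.succ = A.get i := rfl
  simp only [gain, hget, Fin.val_succ, prefixSet_cons_succ, insert_comm]

lemma dumList_cons (f : Finset E → ℝ) (x : E) (A : List E) :
    dumList f (x :: A) =
      (if 0 < f {x} - f ∅ then [x] else []) ++ dumList (fun T => f (insert x T)) A := by
  unfold dumList
  rw [show List.finRange (x :: A).length = 0 :: (List.finRange A.length).map Fin.succ from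
    List.finRange_succ, List.filter_cons, List.filter_map, gain_cons_zero]
  have hfilter : ∀ i ∈ List.finRange A.length,
      ((fun i : Fin (x :: A).length => decide (0 < gain f (x :: A) i)) ∘ Fin.succ) i =
        decide (0 < gain (fun T => f (insert x T)) A i) :=
    fun i _ => decide_eq_decide.mpr (by rw [gain_cons_succ])
  have hget : (x :: A).get ∘ Fin.succ = A.get := rfl
  rw [List.filter_congr hfilter]
  by_cases hpos : 0 < f {x} - f ∅ <;> simp [hpos, List.map_map, hget]

lemma dumObjective_cons (f : Finset E → ℝ) (w : E → ℝ) (x : E) (A : List E) :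
    dumObjective f w (x :: A) =
      (f {x} - f ∅) * w x + dumObjective (fun T => f (insert x T)) w A := by
  simp only [dumObjective, List.length_cons, Fin.sum_univ_succ, gain_cons_zero, gain_cons_succ]
  rfl

theorem dumObjective_dumList (w : E → ℝ) (A : List E) {f : Finset E → ℝ} (hmono : Monotone f)
    (hsub : Submodular f) : dumObjective f w (dumList f A) = dumObjective f w A := by
  induction A generalizing f with
  | nil => rfl
  | cons x A ih =>
    rw [dumList_cons, dumObjective_cons]
    split_ifs with hpos
    · rw [List.singleton_append, dumObjective_cons,
        ih (hmono.comp_insert x) (hsub.comp_insert x)]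
    · have hzero : f {x} - f ∅ = 0 :=
        le_antisymm (not_lt.mp hpos) (sub_nonneg.mpr (hmono (empty_subset _)))
      rw [List.nil_append, hzero, zero_mul, zero_add,
        hsub.comp_insert_eq_self_of_le hmono (sub_eq_zero.mp hzero).le, ih hmono hsub]

end

theorem stmt_13_general {E : Type*} [DecidableEq E]
    (f : Finset E → ℝ)
    (hmono : ∀ X Y : Finset E, X ⊆ Y → f X ≤ f Y)
    (hsub : ∀ X Y : Finset E, f (X ∪ Y) + f (X ∩ Y) ≤ f X + f Y)
    (w : E → ℝ)
    (Astar : List E) :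
    ∑ i : Fin (dumList f Astar).length,
        gain f (dumList f Astar) i * w ((dumList f Astar).get i) =
      ∑ k : Fin Astar.length, gain f Astar k * w (Astar.get k) :=
  dumObjective_dumList w Astar (fun X Y => hmono X Y) hsub

/-- DUM objective value identity: the objective computed along the DUM list `S` itself
equals the objective on the full decreasing-utility ordering `A*`. -/
theorem stmt_13 {E : Type*} [Fintype E] [DecidableEq E]
    (f : Finset E → ℝ) (hf0 : f ∅ = 0)
    (hmono : ∀ X Y : Finset E, X ⊆ Y → f X ≤ f Y)
    (hsub : ∀ X Y : Finset E, f (X ∪ Y) + f (X ∩ Y) ≤ f X + f Y)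
    (w : E → ℝ) (hw : ∀ e : E, 0 < w e)
    (Astar : List E) (hnodup : Astar.Nodup) (hfull : ∀ e : E, e ∈ Astar)
    (hsorted : Astar.Pairwise (fun a b => w b ≤ w a)) :
    ∑ i : Fin (dumList f Astar).length,
        gain f (dumList f Astar) i * w ((dumList f Astar).get i) =
      ∑ k : Fin Astar.length, gain f Astar k * w (Astar.get k) :=
  stmt_13_general f hmono hsub w Astar
end
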